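/- Let φ: S¹×S¹ → S¹×S¹ be a diffeomorphism of the torus. If there exists a diffeomorphism φ̃: D²×S¹ → D²×S¹ of the solid torus extending φ (i.e. φ̃∘ι = ι∘φ where ι: S¹×S¹ → D²×S¹ is the boundary inclusion), then the map S¹ → S¹ given by x ↦ p₂(φ(x,1)) (where p₂ is projection to the second factor) has vanishing degree. -/

import Mathlib

/-
The circle map factors as `z ↦ p₂ (φt (z, 1))` through the boundary inclusion of the circle into
the disk, and that inclusion is nullhomotopic because the disk is convex.
-/

open Metric

/-- The inclusion of the unit circle into the closed unit disk in `ℂ`. -/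
noncomputable def Circle.toDisk (z : Circle) : ↥(closedBall (0:ℂ) 1) :=
  ⟨(z : ℂ), by simp [mem_closedBall_zero_iff, Circle.norm_coe]⟩

theorem ContinuousMap.nullhomotopic_of_contractibleSpace {X Y : Type*} [TopologicalSpace X]
    [TopologicalSpace Y] [ContractibleSpace Y] (f : C(X, Y)) : f.Nullhomotopic :=
  (id_nullhomotopic Y).comp_left f

theorem Circle.continuous_toDisk : Continuous Circle.toDisk :=
  continuous_subtype_val.subtype_mk _

/-- If a self-homeomorphism `φ` of the torus `S¹ × S¹` extends to a homeomorphism `φt` of the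
solid torus `D² × S¹` (via the boundary inclusion), then the circle map `z ↦ p₂(φ(z,1))`
has vanishing degree, i.e. it is homotopic to a constant map. -/
theorem solid_torus_extension_implies_degree_zero
    (φ : (Circle × Circle) ≃ₜ (Circle × Circle))
    (φt : (↥(closedBall (0:ℂ) 1) × Circle) ≃ₜ (↥(closedBall (0:ℂ) 1) × Circle))
    (hext : ∀ z w : Circle,
      φt (Circle.toDisk z, w) = (Circle.toDisk (φ (z, w)).1, (φ (z, w)).2)) :
    ∃ c : Circle, ContinuousMap.Homotopic
      ⟨fun z : Circle => (φ (z, 1)).2, continuous_snd.comp (φ.continuous.comp (continuous_id.prodMk continuous_const))⟩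
      ⟨fun _ : Circle => c, continuous_const⟩ := by
  have : ContractibleSpace (closedBall (0:ℂ) 1) :=
    (convex_closedBall 0 1).contractibleSpace (nonempty_closedBall.2 zero_le_one)
  let slice : C(↥(closedBall (0:ℂ) 1), Circle) :=
    ⟨fun x => (φt (x, 1)).2, by fun_prop⟩
  obtain ⟨c, hc⟩ := (ContinuousMap.nullhomotopic_of_contractibleSpace
    ⟨Circle.toDisk, Circle.continuous_toDisk⟩).comp_right slice
  refine ⟨c, ?_⟩
  convert hc using 1
  · ext z
    simp [slice, hext]
  · rfl
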